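/- Let n be a nonnegative integer and let a, b be complex numbers with (a)_n ≠ 0, (1+a+n)_n ≠ 0, (1+a−b)_n ≠ 0, and (1−b−n)_n ≠ 0. Then the sum of the first n+1 terms of the series _3F_2(a/2, (a+1)/2, b ; a, 1+a+n ; 4), namely Σ_{k=0}^{n} [(a/2)_k ((a+1)/2)_k (b)_k / (k! (a)_k (1+a+n)_k)] 4^k, equals [(b)_n / n!] · _4F_3(−n, (1+a−b)/2, (2+a−b)/2, 1 ; 1+a−b, 1−b−n, 1+a+n ; 4). -/

import Mathlib

open Finset

/-- The rising factorial (Pochhammer symbol) `(a)_k = a(a+1)⋯(a+k-1)`. -/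
noncomputable def poch (a : ℂ) (k : ℕ) : ℂ := ∏ i ∈ Finset.range k, (a + i)

/-!
The duplication formula `(a/2)_k ((a+1)/2)_k 4^k = (a)_{2k} = (a)_k (a+k)_k` turns the left side
into `S_n(a, b) = ∑_{k ≤ n} (a+k)_k (b)_k / (k! (1+a+n)_k)`. Applied to `1+a-b`, together with the
reflection `(b)_n (-n)_k / (n! (1-b-n)_k) = (b)_{n-k} / (n-k)!`, it turns the right side into
`T_n(a, b) = ∑_{k ≤ n} (b)_{n-k} (1+a-b+k)_k / ((n-k)! (1+a+n)_k)`.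
Shifting `k` by one, both sums satisfy
`X_{n+1}(a, b) = X_n(a+1, b) + (b)_{n+1} / (n+1)! - b / (a+n+2) · X_n(a+2, b+1)`,
and they agree for `n = 0`, so they agree for all `n` by induction.
-/

open Nat

@[simp] lemma poch_zero (a : ℂ) : poch a 0 = 1 := by simp [poch]

lemma poch_succ (a : ℂ) (k : ℕ) : poch a (k + 1) = poch a k * (a + k) :=
  prod_range_succ _ _

lemma poch_succ' (a : ℂ) (k : ℕ) : poch a (k + 1) = a * poch (a + 1) k := by
  rw [poch, prod_range_succ', mul_comm, poch, Nat.cast_zero, add_zero]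
  congr 1
  exact prod_congr rfl fun i _ => by push_cast; ring

lemma poch_add (a : ℂ) (m n : ℕ) : poch a (m + n) = poch a m * poch (a + m) n := by
  rw [poch, prod_range_add, poch, poch]
  push_cast
  simp_rw [add_assoc]

lemma poch_ne_zero_of_le {a : ℂ} {m n : ℕ} (h : poch a n ≠ 0) (hm : m ≤ n) : poch a m ≠ 0 := by
  obtain ⟨j, rfl⟩ := Nat.exists_eq_add_of_le hm
  rw [poch_add] at h
  exact left_ne_zero_of_mul h

lemma poch_succ_ne_zero_iff {c : ℂ} {k : ℕ} :
    poch c (k + 1) ≠ 0 ↔ c ≠ 0 ∧ poch (c + 1) k ≠ 0 := by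
  rw [poch_succ', mul_ne_zero_iff]

lemma poch_natCast_add_one_mul_factorial (m k : ℕ) :
    poch ((m : ℂ) + 1) k * (m ! : ℂ) = ((m + k) ! : ℂ) := by
  induction k with
  | zero => simp
  | succ k ih =>
    rw [poch_succ, mul_right_comm, ih, ← add_assoc, factorial_succ]
    push_cast
    ring

lemma poch_one (k : ℕ) : poch 1 k = (k ! : ℂ) := by
  simpa using poch_natCast_add_one_mul_factorial 0 k

lemma poch_reflect (x : ℂ) (k : ℕ) : poch x k = (-1) ^ k * poch (1 - x - k) k := by
  induction k with
  | zero => simp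
  | succ k ih =>
    rw [poch_succ, ih, poch_succ', pow_succ]
    push_cast
    ring_nf

lemma poch_eq_neg_one_pow_mul_poch_tsub_mul_poch (b : ℂ) {n k : ℕ} (hk : k ≤ n) :
    poch b n = (-1) ^ k * poch b (n - k) * poch (1 - b - n) k := by
  rw [← Nat.sub_add_cancel hk, poch_add, poch_reflect (b + _) k, Nat.sub_add_cancel hk,
    Nat.cast_sub hk]
  ring_nf

lemma poch_neg_natCast_mul_factorial {n k : ℕ} (hk : k ≤ n) :
    poch (-n) k * ((n - k) ! : ℂ) = (-1) ^ k * n ! := by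
  have : 1 - -(n : ℂ) - k = ((n - k : ℕ) : ℂ) + 1 := by push_cast [Nat.cast_sub hk]; ring
  rw [poch_reflect, this, mul_assoc, poch_natCast_add_one_mul_factorial, Nat.sub_add_cancel hk]

lemma poch_half_mul_poch_half_mul_four_pow (a : ℂ) (k : ℕ) :
    poch (a / 2) k * poch ((a + 1) / 2) k * 4 ^ k = poch a (2 * k) := by
  induction k with
  | zero => simp
  | succ k ih =>
    rw [mul_add_one, poch_succ, poch_succ, poch_succ, poch_succ, ← ih]
    push_cast
    ring

lemma three_f_two_term_eq (a b c : ℂ) {k : ℕ} (ha : poch a k ≠ 0) :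
    poch (a / 2) k * poch ((a + 1) / 2) k * poch b k / (k ! * poch a k * poch c k) * 4 ^ k
      = poch (a + k) k * poch b k / (k ! * poch c k) := by
  have hdup : poch (a / 2) k * poch ((a + 1) / 2) k * 4 ^ k = poch a k * poch (a + k) k := by
    rw [poch_half_mul_poch_half_mul_four_pow, two_mul, poch_add]
  calc _ = poch a k * (poch (a + k) k * poch b k) / (poch a k * (k ! * poch c k)) := by
        rw [← mul_assoc, ← hdup]; ring
    _ = _ := mul_div_mul_left _ _ ha

lemma four_f_three_term_eq (a b c : ℂ) {n k : ℕ} (hk : k ≤ n) (hab : poch (1 + a - b) k ≠ 0)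
    (hb : poch (1 - b - n) k ≠ 0) :
    poch b n / n ! * (poch (-n) k * poch ((1 + a - b) / 2) k * poch ((2 + a - b) / 2) k *
      poch 1 k / (k ! * poch (1 + a - b) k * poch (1 - b - n) k * poch c k) * 4 ^ k)
      = poch b (n - k) * poch (1 + a - b + k) k / ((n - k) ! * poch c k) := by
  have hdup : poch ((1 + a - b) / 2) k * poch ((2 + a - b) / 2) k * 4 ^ k
      = poch (1 + a - b) k * poch (1 + a - b + k) k := by
    rw [show (2 + a - b) / 2 = (1 + a - b + 1) / 2 by ring,
      poch_half_mul_poch_half_mul_four_pow, two_mul, poch_add]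
  have hrefl : poch b n * poch (-n) k * ((n - k) ! : ℂ)
      = n ! * poch b (n - k) * poch (1 - b - n) k := by
    rw [mul_assoc, poch_neg_natCast_mul_factorial hk, poch_eq_neg_one_pow_mul_poch_tsub_mul_poch b hk]
    have hsign : (-1 : ℂ) ^ k * (-1) ^ k = 1 := by rw [← mul_pow]; norm_num
    linear_combination (n ! * poch b (n - k) * poch (1 - b - n) k) * hsign
  have hn : (n ! : ℂ) ≠ 0 := by exact_mod_cast factorial_ne_zero n
  have hk' : (k ! : ℂ) ≠ 0 := by exact_mod_cast factorial_ne_zero k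
  have hnk : ((n - k) ! : ℂ) ≠ 0 := by exact_mod_cast factorial_ne_zero (n - k)
  rw [poch_one]
  field_simp
  congr 1
  linear_combination (poch ((1 + a - b) / 2) k * poch ((2 + a - b) / 2) k * 4 ^ k) * hrefl
    + (n ! * poch b (n - k) * poch (1 - b - n) k) * hdup

noncomputable def leftTerm (n : ℕ) (a b : ℂ) (k : ℕ) : ℂ :=
  poch (a + k) k * poch b k / (k ! * poch (1 + a + n) k)

noncomputable def rightTerm (n : ℕ) (a b : ℂ) (k : ℕ) : ℂ :=
  poch b (n - k) * poch (1 + a - b + k) k / ((n - k) ! * poch (1 + a + n) k)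

lemma leftTerm_succ_succ (n k : ℕ) (a b : ℂ) (h : poch (a + n + 2) (k + 1) ≠ 0) :
    leftTerm (n + 1) a b (k + 1)
      = leftTerm n (a + 1) b (k + 1) - b / (a + n + 2) * leftTerm n (a + 2) (b + 1) k := by
  obtain ⟨hc, hc'⟩ := poch_succ_ne_zero_iff.mp h
  simp only [leftTerm, Nat.cast_add, Nat.cast_one, factorial_succ, Nat.cast_mul]
  rw [show 1 + a + (n + 1) = a + n + 2 by ring, show 1 + (a + 1) + n = a + n + 2 by ring,
    show 1 + (a + 2) + n = a + n + 2 + 1 by ring, show a + (k + 1) = a + k + 1 by ring,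
    show a + 1 + (k + 1) = a + k + 2 by ring, show a + 2 + k = a + k + 2 by ring,
    poch_succ' (a + k + 1), show a + k + 1 + 1 = a + k + 2 by ring, poch_succ (a + k + 2),
    poch_succ' b, poch_succ' (a + n + 2)]
  field_simp
  ring

lemma rightTerm_succ_succ (n k : ℕ) (a b : ℂ) (hkn : k ≤ n) (h : poch (a + n + 2) (k + 1) ≠ 0) :
    rightTerm (n + 1) a b (k + 1)
      = rightTerm n (a + 1) b k - b / (a + n + 2) * rightTerm n (a + 2) (b + 1) k := by
  obtain ⟨hc, hc'⟩ := poch_succ_ne_zero_iff.mp h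
  have hnk : ((n - k) ! : ℂ) ≠ 0 := by exact_mod_cast factorial_ne_zero (n - k)
  have hb : b * poch (b + 1) (n - k) = poch b (n - k) * (b + n - k) := by
    rw [← poch_succ', poch_succ, Nat.cast_sub hkn, add_sub_assoc]
  have hden : (a + n + 2) * poch (a + n + 2 + 1) k = poch (a + n + 2) k * (a + n + 2 + k) := by
    rw [← poch_succ', poch_succ]
  simp only [rightTerm, Nat.cast_add, Nat.cast_one, Nat.add_sub_add_right]
  rw [show 1 + a + (n + 1) = a + n + 2 by ring, show 1 + (a + 1) + n = a + n + 2 by ring,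
    show 1 + (a + 2) + n = a + n + 2 + 1 by ring, show 1 + a - b + (k + 1) = a - b + k + 2 by ring,
    show 1 + (a + 1) - b + k = a - b + k + 2 by ring,
    show 1 + (a + 2) - (b + 1) + k = a - b + k + 2 by ring,
    poch_succ (a - b + k + 2), poch_succ' (a + n + 2)]
  have hp : poch (a + n + 2) k ≠ 0 := poch_ne_zero_of_le h k.le_succ
  field_simp
  linear_combination (-poch (a - b + k + 2) k * poch b (n - k)) * hden
    + (poch (a - b + k + 2) k * poch (a + n + 2) k) * hb

lemma leftTerm_zero (n : ℕ) (a b : ℂ) : leftTerm n a b 0 = 1 := by simp [leftTerm]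

lemma rightTerm_zero (n : ℕ) (a b : ℂ) : rightTerm n a b 0 = poch b n / n ! := by
  simp [rightTerm]

lemma leftTerm_last (n : ℕ) (a b : ℂ) (h : poch (a + n + 2) (n + 1) ≠ 0) :
    leftTerm n (a + 1) b (n + 1) = poch b (n + 1) / ((n + 1)! : ℂ) := by
  rw [leftTerm, show a + 1 + ((n + 1 : ℕ) : ℂ) = a + n + 2 by push_cast; ring,
    show 1 + (a + 1) + n = a + n + 2 by ring, mul_comm ((n + 1)! : ℂ), mul_div_mul_left _ _ h]

lemma sum_leftTerm_succ (n : ℕ) (a b : ℂ) (h : poch (a + n + 2) (n + 1) ≠ 0) :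
    ∑ k ∈ range (n + 2), leftTerm (n + 1) a b k
      = ∑ k ∈ range (n + 1), leftTerm n (a + 1) b k + poch b (n + 1) / ((n + 1)! : ℂ)
        - b / (a + n + 2) * ∑ k ∈ range (n + 1), leftTerm n (a + 2) (b + 1) k := by
  have hterm : ∀ k ∈ range (n + 1), leftTerm (n + 1) a b (k + 1)
      = leftTerm n (a + 1) b (k + 1) - b / (a + n + 2) * leftTerm n (a + 2) (b + 1) k :=
    fun k hk => leftTerm_succ_succ n k a b
      (poch_ne_zero_of_le h (Nat.succ_le_succ (mem_range_succ_iff.mp hk)))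
  have hshift := (sum_range_succ' (leftTerm n (a + 1) b) (n + 1)).symm.trans
    (sum_range_succ _ _)
  rw [leftTerm_zero, leftTerm_last n a b h] at hshift
  rw [sum_range_succ', sum_congr rfl hterm, sum_sub_distrib, ← mul_sum, leftTerm_zero]
  linear_combination hshift

lemma sum_rightTerm_succ (n : ℕ) (a b : ℂ) (h : poch (a + n + 2) (n + 1) ≠ 0) :
    ∑ k ∈ range (n + 2), rightTerm (n + 1) a b k
      = ∑ k ∈ range (n + 1), rightTerm n (a + 1) b k + poch b (n + 1) / ((n + 1)! : ℂ)
        - b / (a + n + 2) * ∑ k ∈ range (n + 1), rightTerm n (a + 2) (b + 1) k := by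
  have hterm : ∀ k ∈ range (n + 1), rightTerm (n + 1) a b (k + 1)
      = rightTerm n (a + 1) b k - b / (a + n + 2) * rightTerm n (a + 2) (b + 1) k := by
    intro k hk
    have hkn : k ≤ n := mem_range_succ_iff.mp hk
    exact rightTerm_succ_succ n k a b hkn (poch_ne_zero_of_le h (Nat.succ_le_succ hkn))
  rw [sum_range_succ', sum_congr rfl hterm, sum_sub_distrib, ← mul_sum, rightTerm_zero]
  ring

theorem sum_leftTerm_eq_sum_rightTerm (n : ℕ) (a b : ℂ) (h : poch (1 + a + n) n ≠ 0) :
    ∑ k ∈ range (n + 1), leftTerm n a b k = ∑ k ∈ range (n + 1), rightTerm n a b k := by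
  induction n generalizing a b with
  | zero => simp [leftTerm, rightTerm]
  | succ n ih =>
    have h' : poch (a + n + 2) (n + 1) ≠ 0 := by
      rwa [show a + n + 2 = 1 + a + ((n + 1 : ℕ) : ℂ) by push_cast; ring]
    have h₁ : poch (1 + (a + 1) + n) n ≠ 0 := by
      rw [show 1 + (a + 1) + n = a + n + 2 by ring]
      exact poch_ne_zero_of_le h' n.le_succ
    have h₂ : poch (1 + (a + 2) + n) n ≠ 0 := by
      rw [show 1 + (a + 2) + n = a + n + 2 + 1 by ring]
      exact (poch_succ_ne_zero_iff.mp h').2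
    rw [sum_leftTerm_succ n a b h', sum_rightTerm_succ n a b h', ih (a + 1) b h₁,
      ih (a + 2) (b + 1) h₂]

theorem stmt_11 (n : ℕ) (a b : ℂ)
    (ha : poch a n ≠ 0) (han : poch (1 + a + (n : ℂ)) n ≠ 0)
    (hab : poch (1 + a - b) n ≠ 0) (hb : poch (1 - b - (n : ℂ)) n ≠ 0) :
    ∑ k ∈ range (n + 1),
      (poch (a / 2) k * poch ((a + 1) / 2) k * poch b k) /
        ((Nat.factorial k : ℂ) * poch a k * poch (1 + a + (n : ℂ)) k) * (4 : ℂ) ^ k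
    = poch b n / (Nat.factorial n : ℂ) *
      ∑ k ∈ range (n + 1),
        (poch (-(n : ℂ)) k * poch ((1 + a - b) / 2) k * poch ((2 + a - b) / 2) k *
          poch 1 k) /
          ((Nat.factorial k : ℂ) * poch (1 + a - b) k * poch (1 - b - (n : ℂ)) k *
            poch (1 + a + (n : ℂ)) k) * (4 : ℂ) ^ k := by
  rw [mul_sum]
  calc _ = ∑ k ∈ range (n + 1), leftTerm n a b k := sum_congr rfl fun k hk =>
          three_f_two_term_eq a b _ (poch_ne_zero_of_le ha (mem_range_succ_iff.mp hk))
    _ = ∑ k ∈ range (n + 1), rightTerm n a b k := sum_leftTerm_eq_sum_rightTerm n a b han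
    _ = _ := sum_congr rfl fun k hk => by
          have hk : k ≤ n := mem_range_succ_iff.mp hk
          exact (four_f_three_term_eq a b _ hk (poch_ne_zero_of_le hab hk)
            (poch_ne_zero_of_le hb hk)).symm
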